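/- arXiv:1612.06153 — 4 statements merged into one kernel-verified Lean document; each statement's English description precedes it below -/
import Mathlib

section
/- Let A and B be finite sets of real numbers. Then the set {2de : d ∈ A - A, e ∈ B - B} + {2de : d ∈ A - A, e ∈ B - B} is contained in 4·(A-B)² − 4·(A-B)², where (A-B)² = {(a-b)² : a ∈ A, b ∈ B} and k·X denotes the k-fold sumset X + ⋯ + X. -/
open Pointwise

theorem two_mul_sub_mul_sub_eq {R : Type*} [CommRing R] (a a' b b' : R) :
    2 * ((a - a') * (b - b')) =
      (a - b') ^ 2 + (a' - b) ^ 2 - ((a - b) ^ 2 + (a' - b') ^ 2) := by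
  ring

theorem Finset.image_two_mul_subset_sq_sub {R : Type*} [CommRing R] [DecidableEq R]
    (A B : Finset R) :
    ((A - A) * (B - B)).image (fun x => 2 * x) ⊆
      ((A - B).image (fun d => d ^ 2) + (A - B).image (fun d => d ^ 2)) -
        ((A - B).image (fun d => d ^ 2) + (A - B).image (fun d => d ^ 2)) := by
  have sq_mem {a b : R} (ha : a ∈ A) (hb : b ∈ B) :
      (a - b) ^ 2 ∈ (A - B).image (fun d => d ^ 2) :=
    mem_image_of_mem _ (sub_mem_sub ha hb)
  intro x hx
  simp only [mem_image, mem_mul, mem_sub] at hx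
  obtain ⟨_, ⟨_, ⟨a, ha, a', ha', rfl⟩, _, ⟨b, hb, b', hb', rfl⟩, rfl⟩, rfl⟩ := hx
  rw [two_mul_sub_mul_sub_eq]
  exact sub_mem_sub (add_mem_add (sq_mem ha hb') (sq_mem ha' hb))
    (add_mem_add (sq_mem ha hb) (sq_mem ha' hb'))

theorem stmt_2 (A B : Finset ℝ) :
    (((A - A) * (B - B)).image (fun x => 2 * x) +
     ((A - A) * (B - B)).image (fun x => 2 * x)) ⊆
      (((A - B).image (fun d => d ^ 2) + (A - B).image (fun d => d ^ 2) +
        (A - B).image (fun d => d ^ 2) + (A - B).image (fun d => d ^ 2)) -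
       ((A - B).image (fun d => d ^ 2) + (A - B).image (fun d => d ^ 2) +
        (A - B).image (fun d => d ^ 2) + (A - B).image (fun d => d ^ 2))) := by
  set S := (A - B).image (fun d => d ^ 2)
  have h := A.image_two_mul_subset_sq_sub B
  calc _ ⊆ (S + S - (S + S)) + (S + S - (S + S)) := Finset.add_subset_add h h
    _ = _ := by rw [sub_add_sub_comm, ← add_assoc]
end

section
/- Let S ⊆ ℝ be a finite set with |S| ≥ 2. Then |S + S|² · |S·S| ≥ |S|⁴ / (4⌈log₂ |S|⌉). -/
/-!
By Cauchy–Schwarz, `|S|⁴ ≤ |S·S| E(S)` for the multiplicative energy `E(S)`, so it suffices to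
show `E(S) ≤ 4 ⌈log₂ |S|⌉ |S + S|²`. Quadruples with `a₁ b₁ = a₂ b₂ = 0` contribute at most
`(2|S| - 1)²`. Otherwise `a₁ b₁ = a₂ b₂` says that the points `(a₁, a₂)` and `(b₂, b₁)` of
`(S ∖ 0)²` lie on a common line through the origin, so the rest of `E(S)` is the sum of the squared
numbers of points on these lines; splitting each line into its two open half-lines costs a factor
`2`, unless all of `S` has one sign.

In each open half-plane sort the half-lines into dyadic classes by their number of points. If `ℓ`
and `ℓ'` are consecutive in a class, the sums `p + q` with `p ∈ ℓ`, `q ∈ ℓ'` lie strictly between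
`ℓ` and `ℓ'`, hence all these sums, over all classes of a given index and both half-planes, are
distinct points of `(S + S)²`. As counts within a class differ by less than a factor `2`, each
index contributes about `2 |S + S|²`, and there are about `log₂ |S|` indices. The leftover terms
(top half-line of a class, classes of few points) are absorbed using `|S + S| ≥ 2|S| - 1`.
-/

open Finset
open scoped Pointwise Combinatorics.Additive

noncomputable section

namespace Solymosi

/-- For `p.2 ≠ 0`, `ratio p` identifies the line through the origin on which `p` lies. -/
def ratio (p : ℝ × ℝ) : ℝ := p.1 / p.2

lemma fst_eq_ratio_mul {p : ℝ × ℝ} (hp : p.2 ≠ 0) : p.1 = ratio p * p.2 :=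
  (div_mul_cancel₀ p.1 hp).symm

/-- `0 < p.2 * q.2` says that `p` and `q` lie in the same open half-plane; `ratio (p + q)` is
then a weighted mean of `ratio p` and `ratio q`. -/
lemma ratio_add_mem_Ioo {p q : ℝ × ℝ} (hpq : 0 < p.2 * q.2) (hlt : ratio p < ratio q) :
    ratio (p + q) ∈ Set.Ioo (ratio p) (ratio q) := by
  obtain ⟨hwp, hwq⟩ : 0 < p.2 / (p.2 + q.2) ∧ 0 < q.2 / (p.2 + q.2) := by
    rcases mul_pos_iff.mp hpq with ⟨hp, hq⟩ | ⟨hp, hq⟩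
    · exact ⟨div_pos hp (add_pos hp hq), div_pos hq (add_pos hp hq)⟩
    · exact ⟨div_pos_of_neg_of_neg hp (add_neg hp hq), div_pos_of_neg_of_neg hq (add_neg hp hq)⟩
  have hp : p.2 ≠ 0 := left_ne_zero_of_mul hpq.ne'
  have hq : q.2 ≠ 0 := right_ne_zero_of_mul hpq.ne'
  have hsum : p.2 + q.2 ≠ 0 := fun h ↦ by simp [h] at hwp
  have hmean : ratio (p + q) = ratio p + q.2 / (p.2 + q.2) * (ratio q - ratio p) := by
    simp only [ratio, Prod.fst_add, Prod.snd_add]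
    field_simp
    ring
  have hw : p.2 / (p.2 + q.2) = 1 - q.2 / (p.2 + q.2) := by
    field_simp
    ring
  have hd := sub_pos.mpr hlt
  rw [hw] at hwp
  rw [hmean]
  constructor <;> nlinarith [mul_pos hwq hd, mul_pos hwp hd]

lemma eq_of_add_eq_add {p q p' q' : ℝ × ℝ} (hp : p.2 ≠ 0) (hq : q.2 ≠ 0) (hp' : p'.2 ≠ 0)
    (hq' : q'.2 ≠ 0) (hpp' : ratio p = ratio p') (hqq' : ratio q = ratio q')
    (hne : ratio p ≠ ratio q) (hsum : p + q = p' + q') : p = p' := by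
  have h1 : p.1 + q.1 = p'.1 + q'.1 := congrArg Prod.fst hsum
  have h2 : p.2 + q.2 = p'.2 + q'.2 := congrArg Prod.snd hsum
  rw [fst_eq_ratio_mul hp, fst_eq_ratio_mul hq, fst_eq_ratio_mul hp', fst_eq_ratio_mul hq',
    ← hpp', ← hqq'] at h1
  have hsnd : p.2 = p'.2 := by
    have : (ratio p - ratio q) * (p.2 - p'.2) = 0 := by linear_combination h1 - ratio q * h2
    exact sub_eq_zero.mp ((mul_eq_zero.mp this).resolve_left (sub_ne_zero.mpr hne))
  exact Prod.ext (by rw [fst_eq_ratio_mul hp, fst_eq_ratio_mul hp', hpp', hsnd]) hsnd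

def consecPairs (T : Finset ℝ) : Finset (ℝ × ℝ) :=
  {st ∈ T ×ˢ T | st.1 < st.2 ∧ ∀ u ∈ T, st.1 < u → st.2 ≤ u}

section consecPairs

variable {T : Finset ℝ}

lemma mem_consecPairs {st : ℝ × ℝ} :
    st ∈ consecPairs T ↔ st.1 ∈ T ∧ st.2 ∈ T ∧ st.1 < st.2 ∧ ∀ u ∈ T, st.1 < u → st.2 ≤ u := by
  simp [consecPairs, and_assoc]

lemma injOn_fst_consecPairs : Set.InjOn Prod.fst (consecPairs T : Set (ℝ × ℝ)) := by
  rintro ⟨s, t⟩ hst ⟨s', t'⟩ hst' (rfl : s = s')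
  rw [mem_coe, mem_consecPairs] at hst hst'
  exact Prod.ext rfl ((hst.2.2.2 t' hst'.2.1 hst'.2.2.1).antisymm (hst'.2.2.2 t hst.2.1 hst.2.2.1))

lemma eq_of_mem_Ioo_of_mem_consecPairs {st st' : ℝ × ℝ} (h : st ∈ consecPairs T)
    (h' : st' ∈ consecPairs T) {x : ℝ} (hx : x ∈ Set.Ioo st.1 st.2)
    (hx' : x ∈ Set.Ioo st'.1 st'.2) : st = st' := by
  obtain ⟨s, t⟩ := st
  obtain ⟨s', t'⟩ := st'
  rw [mem_consecPairs] at h h'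
  obtain ⟨hx1, hx2⟩ := hx
  obtain ⟨hx1', hx2'⟩ := hx'
  have hs : s = s' := by
    rcases lt_trichotomy s s' with hlt | heq | hgt
    · linarith [h.2.2.2 s' h'.1 hlt]
    · exact heq
    · linarith [h'.2.2.2 s h.1 hgt]
  subst hs
  exact injOn_fst_consecPairs (mem_coe.mpr (mem_consecPairs.mpr h))
    (mem_coe.mpr (mem_consecPairs.mpr h')) rfl

lemma image_fst_consecPairs (hT : T.Nonempty) :
    (consecPairs T).image Prod.fst = T.erase (T.max' hT) := by
  ext s
  simp only [mem_image, mem_erase, Prod.exists, exists_and_right, exists_eq_right]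
  constructor
  · rintro ⟨t, hst⟩
    rw [mem_consecPairs] at hst
    exact ⟨(hst.2.2.1.trans_le (T.le_max' t hst.2.1)).ne, hst.1⟩
  · rintro ⟨hne, hs⟩
    have hnon : ({u ∈ T | s < u} : Finset ℝ).Nonempty :=
      ⟨T.max' hT, mem_filter.mpr ⟨T.max'_mem hT, (T.le_max' s hs).lt_of_ne hne⟩⟩
    obtain ⟨ht, hst⟩ := mem_filter.mp (min'_mem _ hnon)
    exact ⟨_, mem_consecPairs.mpr
      ⟨hs, ht, hst, fun u hu hsu ↦ min'_le _ _ (mem_filter.mpr ⟨hu, hsu⟩)⟩⟩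

lemma sum_consecPairs_fst {M : Type*} [AddCommMonoid M] (g : ℝ → M) :
    ∑ st ∈ consecPairs T, g st.1 = ∑ s ∈ (consecPairs T).image Prod.fst, g s :=
  (sum_image injOn_fst_consecPairs).symm

lemma sum_sq_le_sum_consecPairs (hT : T.Nonempty) (f : ℝ → ℕ)
    (hf : ∀ st ∈ consecPairs T, f st.1 ≤ 2 * f st.2) :
    ∑ s ∈ T, f s ^ 2 ≤ 2 * ∑ st ∈ consecPairs T, f st.1 * f st.2 + f (T.max' hT) ^ 2 := by
  rw [← sum_erase_add T _ (T.max'_mem hT), ← image_fst_consecPairs hT, ← sum_consecPairs_fst,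
    mul_sum]
  gcongr with st hst
  calc f st.1 ^ 2 = f st.1 * f st.1 := sq _
    _ ≤ f st.1 * (2 * f st.2) := Nat.mul_le_mul_left _ (hf st hst)
    _ = 2 * (f st.1 * f st.2) := by ring

lemma sum_consecPairs_le (f : ℝ → ℕ) {B : ℕ} (hB : ∀ t ∈ T, f t ≤ B) :
    ∑ st ∈ consecPairs T, f st.1 * f st.2 ≤ B * ∑ s ∈ T, f s := by
  calc ∑ st ∈ consecPairs T, f st.1 * f st.2 ≤ ∑ st ∈ consecPairs T, f st.1 * B := by
        gcongr with st hst
        exact hB _ (mem_consecPairs.mp hst).2.1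
    _ = B * ∑ s ∈ (consecPairs T).image Prod.fst, f s := by
        rw [← sum_mul, sum_consecPairs_fst (fun s ↦ f s), mul_comm]
    _ ≤ B * ∑ s ∈ T, f s := by
        gcongr
        · exact image_subset_iff.mpr fun st hst ↦ (mem_consecPairs.mp hst).1

end consecPairs

def rayCount (A : Finset (ℝ × ℝ)) (t : ℝ) : ℕ := #{p ∈ A | ratio p = t}

def rayEnergy (A : Finset (ℝ × ℝ)) : ℕ := ∑ t ∈ A.image ratio, rayCount A t ^ 2

def chainPairs (A : Finset (ℝ × ℝ)) (T : Finset ℝ) : Finset ((ℝ × ℝ) × (ℝ × ℝ)) :=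
  {pq ∈ A ×ˢ A | (ratio pq.1, ratio pq.2) ∈ consecPairs T}

section rays

variable {A : Finset (ℝ × ℝ)}

lemma card_eq_sum_rayCount (A : Finset (ℝ × ℝ)) : #A = ∑ t ∈ A.image ratio, rayCount A t :=
  card_eq_sum_card_image ratio A

lemma rayCount_pos {t : ℝ} (ht : t ∈ A.image ratio) : 0 < rayCount A t := by
  obtain ⟨p, hp, rfl⟩ := mem_image.mp ht
  exact card_pos.mpr ⟨p, mem_filter.mpr ⟨hp, rfl⟩⟩

lemma rayCount_le_card {B : Finset ℝ} (hA : ∀ p ∈ A, p.2 ∈ B ∧ p.2 ≠ 0) (t : ℝ) :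
    rayCount A t ≤ #B := by
  refine card_le_card_of_injOn Prod.snd (fun p hp ↦ (hA p (mem_filter.mp hp).1).1) ?_
  intro p hp q hq hpq
  obtain ⟨hpA, hpt⟩ := mem_filter.mp hp
  obtain ⟨hqA, hqt⟩ := mem_filter.mp hq
  refine Prod.ext ?_ hpq
  rw [fst_eq_ratio_mul (hA p hpA).2, fst_eq_ratio_mul (hA q hqA).2, hpt, hqt, hpq]

lemma mem_of_mem_chainPairs {T : Finset ℝ} {pq : (ℝ × ℝ) × (ℝ × ℝ)} (h : pq ∈ chainPairs A T) :
    pq.1 ∈ A ∧ pq.2 ∈ A :=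
  mem_product.mp (mem_filter.mp h).1

lemma card_chainPairs (A : Finset (ℝ × ℝ)) (T : Finset ℝ) :
    #(chainPairs A T) = ∑ st ∈ consecPairs T, rayCount A st.1 * rayCount A st.2 := by
  rw [card_eq_sum_card_fiberwise (s := chainPairs A T) (t := consecPairs T)
    (f := fun pq ↦ (ratio pq.1, ratio pq.2)) fun pq hpq ↦ (mem_filter.mp hpq).2]
  refine sum_congr rfl fun st hst ↦ ?_
  rw [rayCount, rayCount, ← card_product]
  congr 1
  ext ⟨p, q⟩
  simp only [chainPairs, mem_filter, mem_product, Prod.ext_iff]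
  constructor
  · rintro ⟨⟨⟨hp, hq⟩, -⟩, h1, h2⟩
    exact ⟨⟨hp, h1⟩, hq, h2⟩
  · rintro ⟨⟨hp, h1⟩, hq, h2⟩
    exact ⟨⟨⟨hp, hq⟩, by rwa [h1, h2]⟩, h1, h2⟩

lemma injOn_add_chainPairs (hA : ∀ p ∈ A, ∀ q ∈ A, 0 < p.2 * q.2) (T : Finset ℝ) :
    Set.InjOn (fun pq : (ℝ × ℝ) × (ℝ × ℝ) ↦ pq.1 + pq.2) (chainPairs A T) := by
  rintro ⟨p, q⟩ hpq ⟨p', q'⟩ hpq' (hsum : p + q = p' + q')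
  obtain ⟨hp, hq⟩ := mem_of_mem_chainPairs hpq
  obtain ⟨hp', hq'⟩ := mem_of_mem_chainPairs hpq'
  have hc := (mem_filter.mp (mem_coe.mp hpq)).2
  have hc' := (mem_filter.mp (mem_coe.mp hpq')).2
  have hlt := (mem_consecPairs.mp hc).2.2.1
  have hlt' := (mem_consecPairs.mp hc').2.2.1
  have hr := ratio_add_mem_Ioo (hA p hp q hq) hlt
  rw [hsum] at hr
  have hrat := Prod.ext_iff.mp
    (eq_of_mem_Ioo_of_mem_consecPairs hc hc' hr (ratio_add_mem_Ioo (hA p' hp' q' hq') hlt'))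
  have hne : ∀ x ∈ A, x.2 ≠ 0 := fun x hx ↦ left_ne_zero_of_mul (hA x hx x hx).ne'
  have hpp' := eq_of_add_eq_add (hne p hp) (hne q hq) (hne p' hp') (hne q' hq') hrat.1 hrat.2
    hlt.ne hsum
  subst hpp'
  exact Prod.ext rfl (add_left_cancel hsum)

lemma card_chainPairs_add_card_chainPairs_le {S : Finset ℝ} {A B : Finset (ℝ × ℝ)}
    (hA : A ⊆ S ×ˢ S) (hB : B ⊆ S ×ˢ S) (hApos : ∀ p ∈ A, 0 < p.2) (hBneg : ∀ p ∈ B, p.2 < 0)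
    (T U : Finset ℝ) : #(chainPairs A T) + #(chainPairs B U) ≤ #(S + S) ^ 2 := by
  have hdisj : Disjoint (chainPairs A T) (chainPairs B U) := by
    refine disjoint_left.mpr fun pq hA' hB' ↦ ?_
    linarith [hApos _ (mem_of_mem_chainPairs hA').1, hBneg _ (mem_of_mem_chainPairs hB').1]
  rw [← card_union_of_disjoint hdisj, sq, ← card_product]
  refine card_le_card_of_injOn (fun pq ↦ pq.1 + pq.2) ?_ ?_
  · intro pq hpq
    obtain ⟨hp, hq⟩ : pq.1 ∈ S ×ˢ S ∧ pq.2 ∈ S ×ˢ S := by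
      rcases mem_union.mp (mem_coe.mp hpq) with h | h
      · exact ⟨hA (mem_of_mem_chainPairs h).1, hA (mem_of_mem_chainPairs h).2⟩
      · exact ⟨hB (mem_of_mem_chainPairs h).1, hB (mem_of_mem_chainPairs h).2⟩
    rw [mem_product] at hp hq
    exact mem_product.mpr ⟨add_mem_add hp.1 hq.1, add_mem_add hp.2 hq.2⟩
  · intro pq hpq pq' hpq' hsum
    have hsnd := congrArg Prod.snd hsum
    simp only [Prod.snd_add] at hsnd
    rw [coe_union] at hpq hpq'
    rcases hpq with h | h <;> rcases hpq' with h' | h'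
    · exact injOn_add_chainPairs (fun p hp q hq ↦ mul_pos (hApos p hp) (hApos q hq)) T h h' hsum
    · linarith [hApos _ (mem_of_mem_chainPairs h).1, hApos _ (mem_of_mem_chainPairs h).2,
        hBneg _ (mem_of_mem_chainPairs h').1, hBneg _ (mem_of_mem_chainPairs h').2]
    · linarith [hBneg _ (mem_of_mem_chainPairs h).1, hBneg _ (mem_of_mem_chainPairs h).2,
        hApos _ (mem_of_mem_chainPairs h').1, hApos _ (mem_of_mem_chainPairs h').2]
    · exact injOn_add_chainPairs (fun p hp q hq ↦ mul_pos_of_neg_of_neg (hBneg p hp) (hBneg q hq))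
        U h h' hsum

end rays

def level (A : Finset (ℝ × ℝ)) (j : ℕ) : Finset ℝ :=
  {t ∈ A.image ratio | Nat.log 2 (rayCount A t) = j}

/-- Bounds the squared count of the top line of `level A j` when all counts are at most `K`
(the level is empty unless `2 ^ j ≤ K`). -/
def topBound (K j : ℕ) : ℕ := if 2 ^ j ≤ K then min (4 ^ (j + 1)) (K ^ 2) else 0

lemma three_mul_sum_range_four_pow (a : ℕ) : 3 * ∑ j ∈ range a, 4 ^ (j + 1) + 4 = 4 ^ (a + 1) := by
  induction a with
  | zero => simp
  | succ a ih => rw [sum_range_succ, pow_succ 4 (a + 1)]; omega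

lemma three_mul_sum_topBound_le (K J : ℕ) : 3 * ∑ j ∈ range J, topBound K j ≤ 7 * K ^ 2 := by
  rcases Nat.eq_zero_or_pos K with rfl | hK
  · simp [topBound]
  set a := Nat.log 2 K
  have h2a : 2 ^ a ≤ K := Nat.pow_log_le_self 2 hK.ne'
  have hsub : ∑ j ∈ range J, topBound K j ≤ ∑ j ∈ range (a + 1), topBound K j := by
    refine sum_le_sum_of_ne_zero fun j _ hj ↦ mem_range.mpr (Nat.lt_succ_of_le ?_)
    unfold topBound at hj
    exact Nat.le_log_of_pow_le one_lt_two (by by_contra h; simp [h] at hj)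
  have hlow : ∑ j ∈ range a, topBound K j ≤ ∑ j ∈ range a, 4 ^ (j + 1) :=
    sum_le_sum fun j _ ↦ by unfold topBound; split_ifs <;> simp
  have htop : topBound K a ≤ K ^ 2 := by simp [topBound, h2a]
  have hgeom := three_mul_sum_range_four_pow a
  have h4a : 4 ^ (a + 1) ≤ 4 * K ^ 2 := by
    rw [pow_succ', show 4 ^ a = (2 ^ a) ^ 2 by rw [← pow_mul, mul_comm, pow_mul]; norm_num]
    exact Nat.mul_le_mul_left 4 (Nat.pow_le_pow_left h2a 2)
  rw [sum_range_succ] at hsub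
  omega

section levels

variable {A : Finset (ℝ × ℝ)} {j : ℕ} {t : ℝ}

lemma pow_le_rayCount_of_mem_level (ht : t ∈ level A j) : 2 ^ j ≤ rayCount A t := by
  obtain ⟨ht', rfl⟩ := mem_filter.mp ht
  exact Nat.pow_log_le_self 2 (rayCount_pos ht').ne'

lemma rayCount_lt_pow_of_mem_level (ht : t ∈ level A j) : rayCount A t < 2 ^ (j + 1) := by
  obtain ⟨-, rfl⟩ := mem_filter.mp ht
  exact Nat.lt_pow_succ_log_self one_lt_two _

lemma sum_level {M : Type*} [AddCommMonoid M] (f : ℝ → M) {J : ℕ}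
    (hJ : ∀ t, rayCount A t < 2 ^ J) :
    ∑ j ∈ range J, ∑ t ∈ level A j, f t = ∑ t ∈ A.image ratio, f t :=
  sum_fiberwise_of_maps_to
    (fun t ht ↦ mem_range.mpr (Nat.log_lt_of_lt_pow (rayCount_pos ht).ne' (hJ t))) f

lemma sum_sq_level_le {K : ℕ} (hK : ∀ t, rayCount A t ≤ K) (j : ℕ) :
    ∑ t ∈ level A j, rayCount A t ^ 2 ≤ 2 * #(chainPairs A (level A j)) + topBound K j := by
  rcases (level A j).eq_empty_or_nonempty with h | h
  · simp [h]
  rw [card_chainPairs]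
  refine (sum_sq_le_sum_consecPairs h _ fun st hst ↦ ?_).trans (add_le_add_right ?_ _)
  · obtain ⟨hs, ht, -⟩ := mem_consecPairs.mp hst
    calc rayCount A st.1 ≤ 2 ^ (j + 1) := (rayCount_lt_pow_of_mem_level hs).le
      _ = 2 * 2 ^ j := pow_succ' 2 j
      _ ≤ 2 * rayCount A st.2 := Nat.mul_le_mul_left 2 (pow_le_rayCount_of_mem_level ht)
  · have htop := (level A j).max'_mem h
    rw [topBound, if_pos ((pow_le_rayCount_of_mem_level htop).trans (hK _))]
    refine le_min ?_ (Nat.pow_le_pow_left (hK _) 2)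
    calc rayCount A ((level A j).max' h) ^ 2 ≤ (2 ^ (j + 1)) ^ 2 :=
          Nat.pow_le_pow_left (rayCount_lt_pow_of_mem_level htop).le 2
      _ = 4 ^ (j + 1) := by rw [← pow_mul, mul_comm, pow_mul]; norm_num

lemma card_chainPairs_level_le (j : ℕ) :
    #(chainPairs A (level A j)) ≤ 2 ^ (j + 1) * ∑ t ∈ level A j, rayCount A t := by
  rw [card_chainPairs]
  exact sum_consecPairs_le _ fun t ht ↦ (rayCount_lt_pow_of_mem_level ht).le

end levels

lemma sum_one_sub_inv_two_pow_le {J : ℕ} (hJ : 2 ≤ J) :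
    ∑ j ∈ range J, (1 - ((2 : ℝ) ^ j)⁻¹) ≤ J - 3 / 2 := by
  have h : ∑ j ∈ range 2, ((2 : ℝ) ^ j)⁻¹ ≤ ∑ j ∈ range J, ((2 : ℝ) ^ j)⁻¹ :=
    sum_le_sum_of_subset_of_nonneg (range_subset_range.mpr hJ) fun _ _ _ ↦ by positivity
  rw [sum_sub_distrib, sum_const, card_range, nsmul_one]
  norm_num [sum_range_succ] at h ⊢
  linarith

section halfPlanes

variable {S : Finset ℝ} {A B : Finset (ℝ × ℝ)} {K : ℕ}

/-- The consecutive-line sums of the `j`-th level number at most `|S + S| ^ 2` and at most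
`2 ^ (j + 1)` times the mass of the level; combine the two bounds with weights `1 - 2⁻ʲ`, `2⁻ʲ`. -/
lemma sum_sq_level_add_sum_sq_level_le (hA : A ⊆ S ×ˢ S) (hB : B ⊆ S ×ˢ S)
    (hApos : ∀ p ∈ A, 0 < p.2) (hBneg : ∀ p ∈ B, p.2 < 0) (hAK : ∀ t, rayCount A t ≤ K)
    (hBK : ∀ t, rayCount B t ≤ K) (j : ℕ) :
    ((∑ t ∈ level A j, rayCount A t ^ 2 + ∑ t ∈ level B j, rayCount B t ^ 2 : ℕ) : ℝ) ≤
      2 * (1 - ((2 : ℝ) ^ j)⁻¹) * #(S + S) ^ 2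
        + 4 * ((∑ t ∈ level A j, rayCount A t + ∑ t ∈ level B j, rayCount B t : ℕ) : ℝ)
        + 2 * topBound K j := by
  set G := #(chainPairs A (level A j)) + #(chainPairs B (level B j))
  set M := ∑ t ∈ level A j, rayCount A t + ∑ t ∈ level B j, rayCount B t
  have hsq := add_le_add (sum_sq_level_le hAK j) (sum_sq_level_le hBK j)
  have hGW : (G : ℝ) ≤ #(S + S) ^ 2 := by
    exact_mod_cast card_chainPairs_add_card_chainPairs_le hA hB hApos hBneg _ _
  have hGM : (G : ℝ) ≤ 2 ^ (j + 1) * M := by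
    have := add_le_add (card_chainPairs_level_le (A := A) j) (card_chainPairs_level_le (A := B) j)
    rw [← mul_add] at this
    exact_mod_cast this
  have hx1 : ((2 : ℝ) ^ j)⁻¹ ≤ 1 := inv_le_one_of_one_le₀ (one_le_pow₀ one_le_two)
  have hconv : (G : ℝ) ≤ (1 - ((2 : ℝ) ^ j)⁻¹) * #(S + S) ^ 2 + 2 * M := by
    have h2 : ((2 : ℝ) ^ j)⁻¹ * G ≤ 2 * M := by
      calc ((2 : ℝ) ^ j)⁻¹ * G ≤ ((2 : ℝ) ^ j)⁻¹ * (2 ^ (j + 1) * M) := by gcongr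
        _ = 2 * M := by rw [pow_succ]; field_simp
    nlinarith [mul_le_mul_of_nonneg_left hGW (sub_nonneg.mpr hx1)]
  have hsqR : ((∑ t ∈ level A j, rayCount A t ^ 2 + ∑ t ∈ level B j, rayCount B t ^ 2 : ℕ) : ℝ)
      ≤ 2 * G + 2 * topBound K j := by
    exact_mod_cast hsq.trans (by omega)
  linarith

theorem rayEnergy_add_rayEnergy_le (hA : A ⊆ S ×ˢ S) (hB : B ⊆ S ×ˢ S)
    (hApos : ∀ p ∈ A, 0 < p.2) (hBneg : ∀ p ∈ B, p.2 < 0) (hAK : ∀ t, rayCount A t ≤ K)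
    (hBK : ∀ t, rayCount B t ≤ K) {J : ℕ} (hKJ : K < 2 ^ J) (hJ : 2 ≤ J) :
    ((rayEnergy A + rayEnergy B : ℕ) : ℝ) ≤
      2 * (J - 3 / 2) * #(S + S) ^ 2 + 4 * (#A + #B) + 14 / 3 * K ^ 2 := by
  have hA' : ∀ t, rayCount A t < 2 ^ J := fun t ↦ (hAK t).trans_lt hKJ
  have hB' : ∀ t, rayCount B t < 2 ^ J := fun t ↦ (hBK t).trans_lt hKJ
  have henergy : rayEnergy A + rayEnergy B = ∑ j ∈ range J,
      (∑ t ∈ level A j, rayCount A t ^ 2 + ∑ t ∈ level B j, rayCount B t ^ 2) := by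
    rw [sum_add_distrib, sum_level _ hA', sum_level _ hB', rayEnergy, rayEnergy]
  have hmass : #A + #B = ∑ j ∈ range J,
      (∑ t ∈ level A j, rayCount A t + ∑ t ∈ level B j, rayCount B t) := by
    rw [sum_add_distrib, sum_level _ hA', sum_level _ hB', ← card_eq_sum_rayCount,
      ← card_eq_sum_rayCount]
  have htop : (3 * ∑ j ∈ range J, topBound K j : ℝ) ≤ 7 * K ^ 2 := by
    exact_mod_cast three_mul_sum_topBound_le K J
  have hW := sum_one_sub_inv_two_pow_le hJ
  have hlevels := sum_le_sum fun j (_ : j ∈ range J) ↦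
    sum_sq_level_add_sum_sq_level_le hA hB hApos hBneg hAK hBK j
  simp only [sum_add_distrib, ← mul_sum, ← sum_mul] at hlevels
  rw [← Nat.cast_sum, ← Nat.cast_sum, ← henergy, ← hmass] at hlevels
  push_cast at htop hlevels ⊢
  nlinarith [mul_le_mul_of_nonneg_right hW (sq_nonneg (#(S + S) : ℝ))]

lemma rayEnergy_le_of_sign (hA : A ⊆ S ×ˢ S) (hsign : (∀ p ∈ A, 0 < p.2) ∨ ∀ p ∈ A, p.2 < 0)
    (hAK : ∀ t, rayCount A t ≤ K) {J : ℕ} (hKJ : K < 2 ^ J) (hJ : 2 ≤ J) :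
    (rayEnergy A : ℝ) ≤ 2 * (J - 3 / 2) * #(S + S) ^ 2 + 4 * #A + 14 / 3 * K ^ 2 := by
  have hempty : ∀ t, rayCount ∅ t ≤ K := fun t ↦ by simp [rayCount]
  rcases hsign with hpos | hneg
  · simpa [rayEnergy] using rayEnergy_add_rayEnergy_le hA (empty_subset _) hpos (by simp) hAK
      hempty hKJ hJ
  · simpa [rayEnergy] using rayEnergy_add_rayEnergy_le (empty_subset _) hA (by simp) hneg hempty
      hAK hKJ hJ

end halfPlanes

section energy

lemma rayCount_filter_add_rayCount_filter_not (A : Finset (ℝ × ℝ)) (q : ℝ × ℝ → Prop)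
    [DecidablePred q] (t : ℝ) :
    rayCount {p ∈ A | q p} t + rayCount {p ∈ A | ¬ q p} t = rayCount A t := by
  simp only [rayCount, filter_filter]
  rw [← card_filter_add_card_filter_not (s := {p ∈ A | ratio p = t}) q, filter_filter,
    filter_filter]
  simp only [and_comm]

lemma rayEnergy_eq_sum_of_subset {A : Finset (ℝ × ℝ)} {T : Finset ℝ} (h : A.image ratio ⊆ T) :
    rayEnergy A = ∑ t ∈ T, rayCount A t ^ 2 := by
  refine sum_subset h fun t _ ht ↦ ?_
  simp only [rayCount, sq_eq_zero_iff, card_eq_zero, filter_eq_empty_iff]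
  exact fun p hp hpt ↦ ht (mem_image.mpr ⟨p, hp, hpt⟩)

lemma rayEnergy_le_two_mul (A : Finset (ℝ × ℝ)) (q : ℝ × ℝ → Prop) [DecidablePred q] :
    rayEnergy A ≤ 2 * (rayEnergy {p ∈ A | q p} + rayEnergy {p ∈ A | ¬ q p}) := by
  have hsub : ∀ r : ℝ × ℝ → Prop, [DecidablePred r] → {p ∈ A | r p}.image ratio ⊆ A.image ratio :=
    fun _ _ ↦ image_subset_image (filter_subset _ _)
  rw [rayEnergy_eq_sum_of_subset (hsub q), rayEnergy_eq_sum_of_subset (hsub (¬ q ·)), rayEnergy,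
    ← sum_add_distrib, mul_sum]
  refine sum_le_sum fun t _ ↦ ?_
  rw [← rayCount_filter_add_rayCount_filter_not A q t]
  nlinarith [sq_nonneg ((rayCount {p ∈ A | q p} t : ℤ) - rayCount {p ∈ A | ¬ q p} t)]

lemma card_filter_ratio_eq (A : Finset (ℝ × ℝ)) :
    #{pq ∈ A ×ˢ A | ratio pq.1 = ratio pq.2} = rayEnergy A := by
  rw [card_eq_sum_card_fiberwise (f := fun pq ↦ ratio pq.1) (t := A.image ratio)
    fun pq hpq ↦ mem_image_of_mem ratio (mem_product.mp (mem_filter.mp hpq).1).1, rayEnergy]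
  refine sum_congr rfl fun t _ ↦ ?_
  rw [sq, rayCount, ← card_product]
  congr 1
  ext ⟨p, q⟩
  simp only [mem_filter, mem_product]
  constructor
  · rintro ⟨⟨⟨hp, hq⟩, hpq⟩, rfl⟩
    exact ⟨⟨hp, rfl⟩, hq, hpq.symm⟩
  · rintro ⟨⟨hp, rfl⟩, hq, hpq⟩
    exact ⟨⟨⟨hp, hq⟩, hpq.symm⟩, rfl⟩

lemma mulEnergy_eq_rayEnergy {P : Finset ℝ} (hP : 0 ∉ P) : Eₘ[P] = rayEnergy (P ×ˢ P) := by
  have hne : ∀ a ∈ P, a ≠ 0 := fun a ha h ↦ hP (h ▸ ha)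
  rw [← card_filter_ratio_eq, mulEnergy]
  refine card_nbij' (fun x ↦ (x.1, x.2.swap)) (fun x ↦ (x.1, x.2.swap)) ?_ ?_ (fun _ _ ↦ rfl)
    (fun _ _ ↦ rfl)
  · rintro ⟨⟨a₁, a₂⟩, b₁, b₂⟩ hx
    simp only [mem_coe, mem_filter, mem_product] at hx ⊢
    obtain ⟨⟨⟨ha₁, ha₂⟩, hb₁, hb₂⟩, hab⟩ := hx
    refine ⟨⟨⟨ha₁, ha₂⟩, hb₂, hb₁⟩, ?_⟩
    simp only [ratio, Prod.fst_swap, Prod.snd_swap]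
    rw [div_eq_div_iff (hne _ ha₂) (hne _ hb₁)]
    linarith
  · rintro ⟨⟨a₁, a₂⟩, b₂, b₁⟩ hx
    simp only [mem_coe, mem_filter, mem_product] at hx ⊢
    obtain ⟨⟨⟨ha₁, ha₂⟩, hb₂, hb₁⟩, hab⟩ := hx
    refine ⟨⟨⟨ha₁, ha₂⟩, hb₁, hb₂⟩, ?_⟩
    simp only [ratio] at hab
    rw [div_eq_div_iff (hne _ ha₂) (hne _ hb₁)] at hab
    simp only [Prod.fst_swap, Prod.snd_swap]
    linarith

lemma card_filter_mul_eq_zero_le {S : Finset ℝ} (hS : S.Nonempty) :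
    (#{p ∈ S ×ˢ S | p.1 * p.2 = 0} : ℝ) ≤ 2 * #S - 1 := by
  set Z : Finset (ℝ × ℝ) := {p ∈ S ×ˢ S | p.1 * p.2 = 0}
  have hZ : #Z + #(S.erase 0) * #(S.erase 0) ≤ #S * #S := by
    rw [← card_product, ← card_product, ← card_union_of_disjoint]
    · exact card_le_card (union_subset (filter_subset _ _) (product_subset_product
        (erase_subset _ _) (erase_subset _ _)))
    · refine disjoint_left.mpr fun p hpZ hp ↦ ?_
      simp only [Z, mem_filter, mem_product, mem_erase] at hpZ hp
      exact mul_ne_zero hp.1.1 hp.2.1 hpZ.2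
  have herase : (#S : ℝ) - 1 ≤ #(S.erase 0) := by
    rw [← Nat.cast_one, ← Nat.cast_sub hS.card_pos]
    exact_mod_cast pred_card_le_card_erase
  have herase' : (#(S.erase 0) : ℝ) ≤ #S := by exact_mod_cast card_erase_le
  have hS1 : (1 : ℝ) ≤ #S := by exact_mod_cast hS.card_pos
  have hZR : (#Z : ℝ) + #(S.erase 0) * #(S.erase 0) ≤ #S * #S := by exact_mod_cast hZ
  nlinarith [mul_nonneg (sub_nonneg.mpr herase') (by linarith : (0 : ℝ) ≤ #(S.erase 0) + #S - 1)]

lemma mulEnergy_le_mulEnergy_erase_zero {S : Finset ℝ} (hS : S.Nonempty) :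
    (Eₘ[S] : ℝ) ≤ (2 * #S - 1) ^ 2 + Eₘ[S.erase 0] := by
  set Z : Finset (ℝ × ℝ) := {p ∈ S ×ˢ S | p.1 * p.2 = 0}
  have hsplit : Eₘ[S] ≤ #Z ^ 2 + Eₘ[S.erase 0] := by
    rw [mulEnergy_eq_card_filter, mulEnergy_eq_card_filter, sq, ← card_product,
      ← card_filter_add_card_filter_not (fun x : (ℝ × ℝ) × (ℝ × ℝ) ↦ x.1.1 * x.1.2 = 0)]
    refine add_le_add (card_le_card fun x hx ↦ ?_) (card_le_card fun x hx ↦ ?_)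
    · simp only [Z, mem_filter, mem_product] at hx ⊢
      exact ⟨⟨hx.1.1.1, hx.2⟩, hx.1.1.2, hx.1.2 ▸ hx.2⟩
    · simp only [mem_filter, mem_product, mem_erase] at hx ⊢
      obtain ⟨⟨⟨⟨ha, hb⟩, hc, hd⟩, hx⟩, h0⟩ := hx
      obtain ⟨ha0, hb0⟩ := mul_ne_zero_iff.mp h0
      obtain ⟨hc0, hd0⟩ := mul_ne_zero_iff.mp (hx ▸ h0)
      exact ⟨⟨⟨⟨ha0, ha⟩, hb0, hb⟩, ⟨hc0, hc⟩, hd0, hd⟩, hx⟩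
  have hsplitR : (Eₘ[S] : ℝ) ≤ #Z ^ 2 + Eₘ[S.erase 0] := by exact_mod_cast hsplit
  nlinarith [card_filter_mul_eq_zero_le hS, Nat.cast_nonneg (α := ℝ) #Z]

lemma two_mul_card_sub_one_le_card_add {S : Finset ℝ} (hS : S.Nonempty) :
    (2 * #S - 1 : ℝ) ≤ #(S + S) := by
  have h := cauchy_davenport_add_of_linearOrder_isCancelAdd hS hS
  have h1 : 1 ≤ #S := hS.card_pos
  rw [← Nat.cast_ofNat, ← Nat.cast_mul, ← Nat.cast_one, ← Nat.cast_sub (by omega)]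
  exact_mod_cast (show 2 * #S - 1 ≤ #(S + S) by omega)

lemma snd_mem_erase_zero {S : Finset ℝ} {p : ℝ × ℝ} (hp : p ∈ S.erase 0 ×ˢ S.erase 0) :
    p.2 ∈ S.erase 0 ∧ p.2 ≠ 0 :=
  ⟨(mem_product.mp hp).2, (mem_erase.mp (mem_product.mp hp).2).1⟩

lemma card_erase_zero_product_le (S : Finset ℝ) : (#(S.erase 0 ×ˢ S.erase 0) : ℝ) ≤ #S ^ 2 := by
  rw [card_product, ← sq]
  exact_mod_cast Nat.pow_le_pow_left card_erase_le 2

lemma rayCount_filter_le {S : Finset ℝ} (q : ℝ → Prop) [DecidablePred q] {c : ℝ} (hc : c ∈ S)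
    (hc0 : c ≠ 0) (hqc : ¬ q c) (t : ℝ) :
    rayCount {p ∈ S.erase 0 ×ˢ S.erase 0 | q p.2} t ≤ #S - 1 := by
  have hlt : #{x ∈ S.erase 0 | q x} < #S :=
    (card_lt_card (filter_ssubset.mpr ⟨c, mem_erase.mpr ⟨hc0, hc⟩, hqc⟩)).trans_le card_erase_le
  refine (rayCount_le_card (fun p hp ↦ ?_) t).trans (Nat.le_sub_one_of_lt hlt)
  obtain ⟨hp, hqp⟩ := mem_filter.mp hp
  exact ⟨mem_filter.mpr ⟨(snd_mem_erase_zero hp).1, hqp⟩, (snd_mem_erase_zero hp).2⟩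

lemma rayEnergy_erase_zero_le_of_neg_of_pos {S : Finset ℝ} {a b : ℝ} (ha : a ∈ S) (ha0 : a < 0)
    (hb : b ∈ S) (hb0 : 0 < b) {J : ℕ} (hJ : 2 ≤ J) (hSJ : #S ≤ 2 ^ J) :
    (rayEnergy (S.erase 0 ×ˢ S.erase 0) : ℝ) ≤
      4 * (J - 3 / 2) * #(S + S) ^ 2 + 8 * #S ^ 2 + 28 / 3 * (#S - 1) ^ 2 := by
  have hS1 : 1 ≤ #S := card_pos.mpr ⟨a, ha⟩
  set Ω := S.erase 0 ×ˢ S.erase 0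
  have hΩ : Ω ⊆ S ×ˢ S := product_subset_product (erase_subset _ _) (erase_subset _ _)
  have hcore := rayEnergy_add_rayEnergy_le ((filter_subset _ Ω).trans hΩ)
    ((filter_subset _ Ω).trans hΩ) (fun p hp ↦ (mem_filter.mp hp).2)
    (fun p hp ↦ lt_of_le_of_ne (not_lt.mp (mem_filter.mp hp).2)
      (snd_mem_erase_zero (mem_filter.mp hp).1).2)
    (rayCount_filter_le (0 < ·) ha ha0.ne ha0.not_gt)
    (rayCount_filter_le (¬ 0 < ·) hb hb0.ne' (not_not.mpr hb0)) (Nat.sub_one_lt_of_le hS1 hSJ) hJ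
  have hsplit : (rayEnergy Ω : ℝ) ≤
      2 * ((rayEnergy {p ∈ Ω | 0 < p.2} + rayEnergy {p ∈ Ω | ¬ 0 < p.2} : ℕ) : ℝ) := by
    exact_mod_cast rayEnergy_le_two_mul Ω (0 < ·.2)
  have hmass : (#{p ∈ Ω | 0 < p.2} + #{p ∈ Ω | ¬ 0 < p.2} : ℝ) ≤ #S ^ 2 := by
    rw [← Nat.cast_add, card_filter_add_card_filter_not]
    exact card_erase_zero_product_le S
  have hK : ((#S - 1 : ℕ) : ℝ) = #S - 1 := by
    rw [Nat.cast_sub hS1, Nat.cast_one]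
  rw [hK] at hcore
  linarith

lemma rayEnergy_erase_zero_le_of_sign {S : Finset ℝ} (hsign : (∀ a ∈ S, 0 ≤ a) ∨ ∀ a ∈ S, a ≤ 0)
    {J : ℕ} (hJ : 1 ≤ J) (hSJ : #S ≤ 2 ^ J) :
    (rayEnergy (S.erase 0 ×ˢ S.erase 0) : ℝ) ≤
      2 * (J - 1 / 2) * #(S + S) ^ 2 + 26 / 3 * #S ^ 2 := by
  set Ω := S.erase 0 ×ˢ S.erase 0
  have hsign' : (∀ p ∈ Ω, 0 < p.2) ∨ ∀ p ∈ Ω, p.2 < 0 := by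
    have hmem := fun p (hp : p ∈ Ω) ↦ mem_of_mem_erase (snd_mem_erase_zero hp).1
    refine hsign.imp (fun h p hp ↦ ?_) (fun h p hp ↦ ?_)
    · exact (h _ (hmem p hp)).lt_of_ne (snd_mem_erase_zero hp).2.symm
    · exact (h _ (hmem p hp)).lt_of_ne (snd_mem_erase_zero hp).2
  have hcore := rayEnergy_le_of_sign (product_subset_product (erase_subset _ _)
    (erase_subset _ _)) hsign' (fun t ↦ (rayCount_le_card (fun p ↦ snd_mem_erase_zero) t).trans
      card_erase_le) (hSJ.trans_lt (Nat.pow_lt_pow_right one_lt_two (Nat.lt_succ_self J)))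
    (by omega : 2 ≤ J + 1)
  push_cast at hcore
  linarith [card_erase_zero_product_le S]

theorem mulEnergy_le (S : Finset ℝ) (hS : 2 ≤ #S) :
    (Eₘ[S] : ℝ) ≤ 4 * Nat.clog 2 #S * #(S + S) ^ 2 := by
  have hS0 : S.Nonempty := card_pos.mp (by omega)
  have hn : (2 : ℝ) ≤ #S := by exact_mod_cast hS
  have hW : (2 * #S - 1 : ℝ) ^ 2 ≤ #(S + S) ^ 2 :=
    pow_le_pow_left₀ (by linarith) (two_mul_card_sub_one_le_card_add hS0) 2
  have hSL : #S ≤ 2 ^ Nat.clog 2 #S := Nat.le_pow_clog one_lt_two _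
  obtain hL | hL : Nat.clog 2 #S = 1 ∨ 2 ≤ Nat.clog 2 #S := by
    have := Nat.clog_pos one_lt_two hS; omega
  · have hS2 : (#S : ℝ) = 2 := by rw [hL] at hSL; exact_mod_cast (show #S = 2 by omega)
    have htriv : Eₘ[S] ≤ #((S ×ˢ S) ×ˢ S ×ˢ S) := card_filter_le _ _
    simp only [card_product] at htriv
    have htrivR : (Eₘ[S] : ℝ) ≤ #S * #S * (#S * #S) := by exact_mod_cast htriv
    rw [hS2] at htrivR hW
    rw [hL]
    norm_num at hW ⊢
    linarith
  have hLR : (2 : ℝ) ≤ Nat.clog 2 #S := by exact_mod_cast hL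
  have hzero := mulEnergy_le_mulEnergy_erase_zero hS0
  rw [mulEnergy_eq_rayEnergy (notMem_erase 0 S)] at hzero
  by_cases htwo : (∃ a ∈ S, a < 0) ∧ ∃ b ∈ S, 0 < b
  · obtain ⟨⟨a, ha, ha0⟩, b, hb, hb0⟩ := htwo
    have := rayEnergy_erase_zero_le_of_neg_of_pos ha ha0 hb hb0 hL hSL
    nlinarith
  · have hsign : (∀ a ∈ S, 0 ≤ a) ∨ ∀ a ∈ S, a ≤ 0 := by
      rw [not_and_or] at htwo
      exact htwo.imp (fun h a ha ↦ not_lt.mp fun h' ↦ h ⟨a, ha, h'⟩)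
        (fun h a ha ↦ not_lt.mp fun h' ↦ h ⟨a, ha, h'⟩)
    have := rayEnergy_erase_zero_le_of_sign hsign (by omega) hSL
    nlinarith

end energy

end Solymosi

theorem stmt_5 (S : Finset ℝ) (hS : 2 ≤ S.card) :
    ((S + S).card : ℝ) ^ 2 * ((S * S).card : ℝ) ≥
      (S.card : ℝ) ^ 4 / (4 * (⌈Real.logb 2 (S.card : ℝ)⌉ : ℝ)) := by
  have hceil : (⌈Real.logb 2 (S.card : ℝ)⌉ : ℝ) = Nat.clog 2 S.card := by
    have h := Real.ceil_logb_natCast (b := 2) (Nat.cast_nonneg (α := ℝ) S.card)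
    rw [Nat.cast_ofNat, Int.clog_natCast] at h
    exact_mod_cast h
  have hL : (0 : ℝ) < Nat.clog 2 S.card := by exact_mod_cast Nat.clog_pos one_lt_two hS
  have hCS : (S.card : ℝ) ^ 4 ≤ (S * S).card * Eₘ[S] := by
    have h := le_card_mul_mul_mulEnergy S S
    rw [← pow_add] at h
    exact_mod_cast h
  rw [hceil, ge_iff_le, div_le_iff₀ (by positivity)]
  calc (S.card : ℝ) ^ 4 ≤ (S * S).card * Eₘ[S] := hCS
    _ ≤ (S * S).card * (4 * Nat.clog 2 S.card * (S + S).card ^ 2) :=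
        mul_le_mul_of_nonneg_left (Solymosi.mulEnergy_le S hS) (Nat.cast_nonneg _)
    _ = ((S + S).card : ℝ) ^ 2 * (S * S).card * (4 * Nat.clog 2 S.card) := by ring
end
end

section
/- Let A ⊆ ℝ be a finite nonempty set and k, ℓ nonnegative integers. Then |k·A − ℓ·A| ≤ |A + A|^{k+ℓ} / |A|^{k+ℓ−1}. -/
open Pointwise

/-- The `k`-fold iterated sumset of a finite set of reals. -/
noncomputable def iterSumset (A : Finset ℝ) : ℕ → Finset ℝ
  | 0 => {0}
  | n + 1 => iterSumset A n + A

lemma iterSumset_eq_nsmul (A : Finset ℝ) : ∀ n, iterSumset A n = n • A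
  | 0 => rfl
  | n + 1 => by rw [iterSumset, iterSumset_eq_nsmul A n, succ_nsmul]

theorem stmt_6 (A : Finset ℝ) (hA : A.Nonempty) (k l : ℕ) :
    ((iterSumset A k - iterSumset A l).card : ℝ) ≤
      ((A + A).card : ℝ) ^ (k + l) / (A.card : ℝ) ^ (k + l - 1) := by
  rw [iterSumset_eq_nsmul, iterSumset_eq_nsmul]
  cases hkl : k + l with
  | zero =>
    -- `k + l - 1` truncates to `0`, so the bound is `1` and Mathlib's bound `#A` is too weak.
    obtain ⟨rfl, rfl⟩ := Nat.add_eq_zero_iff.mp hkl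
    simp
  | succ n =>
    have hPR : ((k • A - l • A).card : ℝ) ≤ ((A + A).card / A.card : ℝ) ^ (n + 1) * A.card := by
      simpa [hkl] using NNRat.cast_le (K := ℝ) |>.mpr
        (Finset.pluennecke_ruzsa_inequality_nsmul_sub_nsmul_add hA A k l)
    have hA₀ : (A.card : ℝ) ≠ 0 := by exact_mod_cast hA.card_pos.ne'
    calc ((k • A - l • A).card : ℝ) ≤ ((A + A).card / A.card : ℝ) ^ (n + 1) * A.card := hPR
      _ = ((A + A).card : ℝ) ^ (n + 1) / (A.card : ℝ) ^ (n + 1 - 1) := by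
        rw [Nat.add_sub_cancel, div_pow, pow_succ' (A.card : ℝ)]
        field_simp
end

section
/- Let A ⊆ ℝ be finite with |A| ≥ 2 and D = A − A. Then |D² + D²|² · |D·D| ≪ |D² + D²|⁶ / |D|³. -/
open Pointwise Finset

/-!
Writing `D = A - A` and `E = D²`, the identity
`2(p - q)(r - s) = (p - s)² + (q - r)² - (p - r)² - (q - s)²` embeds `D·D` into `2E - 2E`
via `x ↦ 2x`. Plünnecke–Ruzsa gives `|2E - 2E| ≤ |E + E|⁴ / |E|³`, and `|D| ≤ 2|E|` since
squaring is at most two-to-one.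
-/

namespace Finset

section CommRing

variable {R : Type*} [CommRing R] [DecidableEq R]

theorem card_le_two_mul_card_image_sq [NoZeroDivisors R] (s : Finset R) :
    #s ≤ 2 * #(s.image (· ^ 2)) := by
  refine card_le_mul_card_image s 2 fun b hb => ?_
  obtain ⟨x, -, rfl⟩ := mem_image.1 hb
  calc #{a ∈ s | a ^ 2 = x ^ 2} ≤ #{x, -x} := card_le_card fun a ha => by
        simpa [sq_eq_sq_iff_eq_or_eq_neg] using (mem_filter.1 ha).2
    _ ≤ 2 := card_le_two

theorem two_mul_mul_mem_nsmul_sub_nsmul_image_sq (A : Finset R) {d e : R}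
    (hd : d ∈ A - A) (he : e ∈ A - A) :
    2 * (d * e) ∈ 2 • (A - A).image (· ^ 2) - 2 • (A - A).image (· ^ 2) := by
  obtain ⟨p, hp, q, hq, rfl⟩ := mem_sub.1 hd
  obtain ⟨r, hr, s, hs, rfl⟩ := mem_sub.1 he
  have hsq : ∀ x ∈ A, ∀ y ∈ A, (x - y) ^ 2 ∈ (A - A).image (· ^ 2) := fun x hx y hy =>
    mem_image_of_mem _ (sub_mem_sub hx hy)
  rw [show 2 * ((p - q) * (r - s)) =
      ((p - s) ^ 2 + (q - r) ^ 2) - ((p - r) ^ 2 + (q - s) ^ 2) by ring, two_nsmul]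
  exact sub_mem_sub (add_mem_add (hsq p hp s hs) (hsq q hq r hr))
    (add_mem_add (hsq p hp r hr) (hsq q hq s hs))

theorem card_mul_le_card_nsmul_sub_nsmul_image_sq [NoZeroDivisors R] [NeZero (2 : R)]
    (A : Finset R) :
    #((A - A) * (A - A)) ≤ #(2 • (A - A).image (· ^ 2) - 2 • (A - A).image (· ^ 2)) := by
  refine card_le_card_of_injOn (2 * ·) (fun x hx => ?_)
    fun x _ y _ h => mul_left_cancel₀ two_ne_zero h
  obtain ⟨d, hd, e, he, rfl⟩ := mem_mul.1 hx
  exact two_mul_mul_mem_nsmul_sub_nsmul_image_sq A hd he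

end CommRing

theorem card_two_nsmul_sub_two_nsmul_mul_card_pow_le {G : Type*} [AddCommGroup G]
    [DecidableEq G] {B : Finset G} (hB : B.Nonempty) :
    #(2 • B - 2 • B) * #B ^ 3 ≤ #(B + B) ^ 4 := by
  have hB' : (#B : ℚ≥0) ≠ 0 := by exact_mod_cast hB.card_pos.ne'
  have hPR := pluennecke_ruzsa_inequality_nsmul_sub_nsmul_add hB B 2 2
  exact_mod_cast calc (#(2 • B - 2 • B) : ℚ≥0) * #B ^ 3
      ≤ (#(B + B) / #B) ^ (2 + 2) * #B * #B ^ 3 := by gcongr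
    _ = (#(B + B) ^ 4 : ℚ≥0) := by rw [div_pow]; field_simp; ring

theorem card_mul_mul_card_pow_le {R : Type*} [CommRing R] [DecidableEq R] [NoZeroDivisors R]
    [NeZero (2 : R)] {A : Finset R} (hA : A.Nonempty) :
    #((A - A) * (A - A)) * #(A - A) ^ 3 ≤
      8 * #((A - A).image (· ^ 2) + (A - A).image (· ^ 2)) ^ 4 := by
  set E := (A - A).image (· ^ 2)
  calc #((A - A) * (A - A)) * #(A - A) ^ 3 ≤ #(2 • E - 2 • E) * (2 * #E) ^ 3 :=
        Nat.mul_le_mul (card_mul_le_card_nsmul_sub_nsmul_image_sq A)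
          (Nat.pow_le_pow_left (card_le_two_mul_card_image_sq _) 3)
    _ = 8 * (#(2 • E - 2 • E) * #E ^ 3) := by ring
    _ ≤ 8 * #(E + E) ^ 4 :=
        Nat.mul_le_mul_left 8 <|
          card_two_nsmul_sub_two_nsmul_mul_card_pow_le ((hA.sub hA).image _)

end Finset

theorem stmt_18 :
    ∃ C : ℝ, 0 < C ∧ ∀ A : Finset ℝ, 2 ≤ A.card →
      (((A - A).image (fun d => d ^ 2) +
        (A - A).image (fun d => d ^ 2)).card : ℝ) ^ 2 *
          (((A - A) * (A - A)).card : ℝ) ≤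
        C * (((A - A).image (fun d => d ^ 2) +
              (A - A).image (fun d => d ^ 2)).card : ℝ) ^ 6 /
          ((A - A).card : ℝ) ^ 3 := by
  refine ⟨8, by norm_num, fun A hA => ?_⟩
  have hAne : A.Nonempty := card_pos.1 (by omega)
  have hD : (0 : ℝ) < #(A - A) := by exact_mod_cast (hAne.sub hAne).card_pos
  have key : (#((A - A) * (A - A)) * #(A - A) ^ 3 : ℝ) ≤
      8 * #((A - A).image (· ^ 2) + (A - A).image (· ^ 2)) ^ 4 := by
    exact_mod_cast card_mul_mul_card_pow_le hAne
  rw [le_div_iff₀ (by positivity)]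
  set N : ℝ := (#((A - A).image (· ^ 2) + (A - A).image (· ^ 2)) : ℝ)
  calc N ^ 2 * #((A - A) * (A - A)) * #(A - A) ^ 3
      = N ^ 2 * (#((A - A) * (A - A)) * #(A - A) ^ 3) := by ring
    _ ≤ N ^ 2 * (8 * N ^ 4) := by gcongr
    _ = 8 * N ^ 6 := by ring
end
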